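/- With the Fock space operators a_i^± and H_i defined by the explicit action formulas on the basis of W_p, the Cartan–Kac relation ⟦a_i^-, a_i^+⟧ = (L_i - L_i^{-1})/(q - q^{-1}) holds, where ⟦a_i^-, a_i^+⟧ = a_i^- a_i^+ - (-1)^{θ_i} a_i^+ a_i^- and L_i acts on the basis vector |p;r) by multiplication by q^{p - (-1)^{θ_i} r_i - Σ_j r_j}. Equivalently, on each basis vector |p;r) the operator a_i^- a_i^+ - (-1)^{θ_i} a_i^+ a_i^- acts as the scalar [p - (-1)^{θ_i} r_i - Σ_j r_j]. -/

import Mathlib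

noncomputable section

/-- q-integer [x] = (q^x - q^{-x})/(q - q^{-1}). -/
def qb (q : ℝ) (x : ℤ) : ℝ := (q ^ x - q ^ (-x)) / (q - q⁻¹)

/-- q-factorial [x]! = [1][2]⋯[x]. -/
def qfact (q : ℝ) (x : ℕ) : ℝ := ∏ k ∈ Finset.Icc 1 x, qb q (k : ℤ)

/-- Free module on all tuples; the Fock space W_p is spanned by valid tuples. -/
abbrev Wp (N : ℕ) := (Fin N → ℕ) →₀ ℝ

/-- θ grading: 0 for the first n (bosonic) indices, 1 for the rest (fermionic). -/
def th (n : ℕ) {N : ℕ} (i : Fin N) : ℕ := if (i : ℕ) < n then 0 else 1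

/-- valid tuples: fermionic entries ≤ 1 and total sum ≤ p. -/
def valid (n : ℕ) {N : ℕ} (p : ℕ) (r : Fin N → ℕ) : Prop :=
  (∀ i : Fin N, n ≤ (i : ℕ) → r i ≤ 1) ∧ ∑ i, r i ≤ p

/-- sign (-1)^{θ_i (θ_1 r_1 + ⋯ + θ_{i-1} r_{i-1})}. -/
def sgn (n : ℕ) {N : ℕ} (i : Fin N) (r : Fin N → ℕ) : ℝ :=
  (-1 : ℝ) ^ (th n i * ∑ j ∈ Finset.univ.filter (fun j : Fin N => j < i), th n j * r j)

/-- r_1 + ⋯ + r_{i-1}. -/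
def Ssum {N : ℕ} (i : Fin N) (r : Fin N → ℕ) : ℕ :=
  ∑ j ∈ Finset.univ.filter (fun j : Fin N => j < i), r j

/-- creation operator a_i^+. -/
def aP (n : ℕ) {N : ℕ} (p : ℕ) (q : ℝ) (i : Fin N) : Wp N →ₗ[ℝ] Wp N :=
  Finsupp.lift (Wp N) ℝ (Fin N → ℕ) fun r =>
    (sgn n i r * q ^ (-(Ssum i r : ℤ)) * (1 - (th n i : ℝ) * (r i : ℝ)) *
      Real.sqrt (qb q ((r i : ℤ) + 1) * qb q ((p : ℤ) - ∑ l, (r l : ℤ)))) •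
      Finsupp.single (Function.update r i (r i + 1)) 1

/-- annihilation operator a_i^-. -/
def aM (n : ℕ) {N : ℕ} (p : ℕ) (q : ℝ) (i : Fin N) : Wp N →ₗ[ℝ] Wp N :=
  Finsupp.lift (Wp N) ℝ (Fin N → ℕ) fun r =>
    (sgn n i r * q ^ ((Ssum i r : ℤ)) *
      Real.sqrt (qb q (r i : ℤ) * qb q ((p : ℤ) - ∑ l, (r l : ℤ) + 1))) •
      Finsupp.single (Function.update r i (r i - 1)) 1

/-- Cartan operator H_i, diagonal on the basis. -/
def Hop (n : ℕ) {N : ℕ} (p : ℕ) (i : Fin N) : Wp N →ₗ[ℝ] Wp N :=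
  Finsupp.lift (Wp N) ℝ (Fin N → ℕ) fun r =>
    ((p : ℝ) - (-1 : ℝ) ^ th n i * (r i : ℝ) - ∑ j, (r j : ℝ)) • Finsupp.single r 1

/-! Both composites `a_i^- a_i^+` and `a_i^+ a_i^-` are diagonal on the basis: the hop changes only
`r_i`, so the sign and the power of `q` (which depend on `r_1, …, r_{i-1}`) are the same on the way
there and back and cancel, while the two square roots multiply to their common radicand. The
relation then reduces to an identity of `q`-integers: `[r+1][s] - [r][s+1] = [s-r]` with
`s = p - Σ r` for a bosonic index, and a direct check of `r_i ∈ {0, 1}` for a fermionic one. -/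

lemma sub_inv_ne_zero_of_ne_one {q : ℝ} (hq : 0 < q) (hq1 : q ≠ 1) : q - q⁻¹ ≠ 0 := by
  rw [sub_ne_zero]
  intro h
  have hsq : q * q = 1 := by rw [← mul_inv_cancel₀ hq.ne']; exact congrArg (q * ·) h
  rcases mul_self_eq_one_iff.mp hsq with h1 | h1
  · exact hq1 h1
  · linarith

lemma qb_zero (q : ℝ) : qb q 0 = 0 := by simp [qb]

lemma qb_one {q : ℝ} (hq : 0 < q) (hq1 : q ≠ 1) : qb q 1 = 1 := by
  rw [qb, zpow_one, zpow_neg_one, div_self (sub_inv_ne_zero_of_ne_one hq hq1)]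

lemma qb_nonneg {q : ℝ} (hq : 0 < q) {x : ℤ} (hx : 0 ≤ x) : 0 ≤ qb q x := by
  have hxx : -x ≤ x := by linarith
  rcases lt_trichotomy q 1 with h | rfl | h
  · have hpow := zpow_le_zpow_right_of_le_one₀ hq h.le hxx
    have hinv : 1 < q⁻¹ := (one_lt_inv₀ hq).2 h
    exact div_nonneg_of_nonpos (by linarith) (by linarith)
  · simp [qb]
  · have hpow := zpow_le_zpow_right₀ h.le hxx
    have hinv : q⁻¹ < 1 := inv_lt_one_of_one_lt₀ h
    exact div_nonneg (by linarith) (by linarith)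

lemma qb_add_one_mul_sub_mul_qb_add_one {q : ℝ} (hq : 0 < q) (hq1 : q ≠ 1) (a b : ℤ) :
    qb q (a + 1) * qb q b - qb q a * qb q (b + 1) = qb q (b - a) := by
  have hq0 : q ≠ 0 := hq.ne'
  have numerators : (q ^ (a + 1) - q ^ (-(a + 1))) * (q ^ b - q ^ (-b)) -
      (q ^ a - q ^ (-a)) * (q ^ (b + 1) - q ^ (-(b + 1))) =
      (q ^ (b - a) - q ^ (-(b - a))) * (q - q⁻¹) := by
    simp only [zpow_add₀ hq0, zpow_sub₀ hq0, zpow_neg, zpow_one, neg_add, neg_sub]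
    field_simp
    ring
  simp only [qb, div_mul_div_comm, div_sub_div_same]
  rw [numerators, mul_div_mul_right _ _ (sub_inv_ne_zero_of_ne_one hq hq1)]

/-- The scalar of the Cartan–Kac relation, for `t = θ_i`, `ρ = r_i` and `s = p - Σ_j r_j`. -/
lemma cartan_kac_coeff {q : ℝ} (hq : 0 < q) (hq1 : q ≠ 1) {t ρ : ℕ} {s : ℤ}
    (ht : t = 0 ∨ t = 1 ∧ ρ ≤ 1) :
    (1 - (t : ℝ) * ρ) * (qb q (ρ + 1) * qb q s) -
        (-1 : ℝ) ^ t * ((1 - (t : ℝ) * ((ρ : ℝ) - 1)) * (qb q ρ * qb q (s + 1))) =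
      qb q (s - (-1 : ℤ) ^ t * ρ) := by
  rcases ht with rfl | ⟨rfl, hρ⟩
  · simpa using qb_add_one_mul_sub_mul_qb_add_one hq hq1 ρ s
  · interval_cases ρ <;> norm_num [qb_zero, qb_one hq hq1]

lemma sign_zpow_sqrt_mul_sign_zpow_sqrt {s q c X : ℝ} (k : ℤ) (hs : s * s = 1) (hq : q ≠ 0)
    (hX : 0 ≤ X) : (s * q ^ (-k) * c * √X) * (s * q ^ k * √X) = c * X := by
  have hzpow : q ^ (-k) * q ^ k = 1 := by rw [← zpow_add₀ hq, neg_add_cancel, zpow_zero]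
  calc _ = (s * s) * (q ^ (-k) * q ^ k) * c * (√X * √X) := by ring
    _ = c * X := by rw [hs, hzpow, Real.mul_self_sqrt hX]; ring

section Fock

variable (n : ℕ) {N : ℕ} (p : ℕ) (q : ℝ) (i : Fin N) (r : Fin N → ℕ)

lemma aP_single :
    aP n p q i (Finsupp.single r 1) =
      (sgn n i r * q ^ (-(Ssum i r : ℤ)) * (1 - (th n i : ℝ) * (r i : ℝ)) *
        √(qb q ((r i : ℤ) + 1) * qb q ((p : ℤ) - ∑ l, (r l : ℤ)))) •
        Finsupp.single (Function.update r i (r i + 1)) 1 := by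
  simp [aP]

lemma aM_single :
    aM n p q i (Finsupp.single r 1) =
      (sgn n i r * q ^ (Ssum i r : ℤ) *
        √(qb q (r i : ℤ) * qb q ((p : ℤ) - ∑ l, (r l : ℤ) + 1))) •
        Finsupp.single (Function.update r i (r i - 1)) 1 := by
  simp [aM]

lemma sgn_mul_self : sgn n i r * sgn n i r = 1 := by
  rw [sgn, ← pow_add]
  exact Even.neg_one_pow ⟨_, rfl⟩

variable {n q p r}

lemma Ssum_update_self (v : ℕ) : Ssum i (Function.update r i v) = Ssum i r :=
  Finset.sum_congr rfl fun _ hj => Function.update_of_ne (Finset.mem_filter.mp hj).2.ne _ _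

lemma sgn_update_self (v : ℕ) : sgn n i (Function.update r i v) = sgn n i r := by
  unfold sgn
  congr 2
  exact Finset.sum_congr rfl fun j hj => by
    rw [Function.update_of_ne (Finset.mem_filter.mp hj).2.ne]

lemma sum_update_self (v : ℕ) :
    ∑ l, ((Function.update r i v l : ℕ) : ℤ) = ∑ l, (r l : ℤ) - r i + v := by
  rw [← Finset.add_sum_erase _ _ (Finset.mem_univ i),
    ← Finset.add_sum_erase _ _ (Finset.mem_univ i), Function.update_self,
    Finset.sum_congr rfl fun j hj => by
      rw [Function.update_of_ne (Finset.ne_of_mem_erase hj)]]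
  ring

lemma aM_aP_single (hq : 0 < q) (hr : ∑ l, r l ≤ p) :
    aM n p q i (aP n p q i (Finsupp.single r 1)) =
      ((1 - (th n i : ℝ) * r i) *
        (qb q ((r i : ℤ) + 1) * qb q ((p : ℤ) - ∑ l, (r l : ℤ)))) • Finsupp.single r 1 := by
  have hs : (∑ l, (r l : ℤ)) ≤ p := by exact_mod_cast hr
  have hX : 0 ≤ qb q ((r i : ℤ) + 1) * qb q ((p : ℤ) - ∑ l, (r l : ℤ)) :=
    mul_nonneg (qb_nonneg hq (by positivity)) (qb_nonneg hq (by omega))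
  rw [aP_single, map_smul, aM_single, smul_smul, Ssum_update_self, sgn_update_self,
    sum_update_self, Function.update_self, Function.update_idem, Nat.add_sub_cancel,
    Function.update_eq_self]
  push_cast
  rw [show (p : ℤ) - (∑ l, (r l : ℤ) - r i + (r i + 1)) + 1 = p - ∑ l, (r l : ℤ) by ring,
    sign_zpow_sqrt_mul_sign_zpow_sqrt _ (sgn_mul_self n i r) hq.ne' hX]

lemma aP_aM_single (hq : 0 < q) (hr : ∑ l, r l ≤ p) :
    aP n p q i (aM n p q i (Finsupp.single r 1)) =
      ((1 - (th n i : ℝ) * ((r i : ℝ) - 1)) *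
        (qb q (r i : ℤ) * qb q ((p : ℤ) - ∑ l, (r l : ℤ) + 1))) • Finsupp.single r 1 := by
  rcases Nat.eq_zero_or_pos (r i) with hri | hri
  · simp [aM_single, hri, qb_zero]
  have hs : (∑ l, (r l : ℤ)) ≤ p := by exact_mod_cast hr
  have hX : 0 ≤ qb q (r i : ℤ) * qb q ((p : ℤ) - ∑ l, (r l : ℤ) + 1) :=
    mul_nonneg (qb_nonneg hq (by positivity)) (qb_nonneg hq (by omega))
  rw [aM_single, map_smul, aP_single, smul_smul, Ssum_update_self, sgn_update_self,
    sum_update_self, Function.update_self, Function.update_idem, Nat.sub_add_cancel hri,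
    Function.update_eq_self, Nat.cast_sub hri, Nat.cast_sub hri]
  push_cast
  rw [show (p : ℤ) - (∑ l, (r l : ℤ) - r i + (r i - 1)) = p - ∑ l, (r l : ℤ) + 1 by ring,
    show ((r i : ℤ) - 1 + 1) = r i by ring, mul_comm,
    sign_zpow_sqrt_mul_sign_zpow_sqrt _ (sgn_mul_self n i r) hq.ne' hX]

end Fock

theorem cartan_kac_fock_general (n m p : ℕ)
    (q : ℝ) (hq : 0 < q) (hq1 : q ≠ 1) (i : Fin (n + m))
    (r : Fin (n + m) → ℕ) (hr : valid n p r) :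
    aM n p q i (aP n p q i (Finsupp.single r 1)) -
        ((-1 : ℝ) ^ th n i) • aP n p q i (aM n p q i (Finsupp.single r 1)) =
      qb q ((p : ℤ) - (-1 : ℤ) ^ th n i * (r i : ℤ) - ∑ j, (r j : ℤ)) •
        (Finsupp.single r 1 : Wp (n + m)) := by
  obtain ⟨hfermion, hsum⟩ := hr
  have hth : th n i = 0 ∨ th n i = 1 ∧ r i ≤ 1 := by
    unfold th
    split_ifs with hi
    · exact .inl rfl
    · exact .inr ⟨rfl, hfermion i (not_lt.mp hi)⟩
  rw [aM_aP_single i hq hsum, aP_aM_single i hq hsum, smul_smul, ← sub_smul,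
    cartan_kac_coeff hq hq1 hth]
  congr 2
  ring

/-- Cartan–Kac relation on Fock space: a_i^- a_i^+ - (-1)^{θ_i} a_i^+ a_i^-
acts on the basis vector |p;r) as the scalar [p - (-1)^{θ_i} r_i - Σ_j r_j]. -/
theorem cartan_kac_fock (n m p : ℕ) (hn : 1 ≤ n) (hm : 1 ≤ m) (hp : 1 ≤ p)
    (q : ℝ) (hq : 0 < q) (hq1 : q ≠ 1) (i : Fin (n + m))
    (r : Fin (n + m) → ℕ) (hr : valid n p r) :
    aM n p q i (aP n p q i (Finsupp.single r 1)) -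
        ((-1 : ℝ) ^ th n i) • aP n p q i (aM n p q i (Finsupp.single r 1)) =
      qb q ((p : ℤ) - (-1 : ℤ) ^ th n i * (r i : ℤ) - ∑ j, (r j : ℤ)) •
        (Finsupp.single r 1 : Wp (n + m)) :=
  cartan_kac_fock_general n m p q hq hq1 i r hr
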